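/- arXiv:1806.03562 — 5 statements merged into one kernel-verified Lean document; each statement's English description precedes it below -/
import Mathlib

section
/- Let N, M, p be natural numbers with p ≥ 1, 0 ≤ M ≤ N and N ≡ M (mod 2), and set ℓ = (N − M)/2. Let ε : Fin N → ℤ be any sign vector (each ε i ∈ {−1, 1}) with ∑_{i} ε i = M. Then the signed sum of the monomials ∏_{i} (ε i)^{q i} over all weak compositions q of 2p into N parts equals ∑_{m=0}^{p} C(p − m + ℓ − 1, p − m) · C(2m + M − 1, 2m); equivalently, the number of weak compositions q of 2p into N parts with ∏_i (ε i)^{q i} = 1 minus the number of those with ∏_i (ε i)^{q i} = −1 equals this sum. -/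
/-!
The sum of `∏ i, ε i ^ q i` over the weak compositions `q` of `n` is the coefficient of `Xⁿ` in
`∏ i, 1 / (1 - ε i X)`. With `ℓ + M` signs `+1` and `ℓ` signs `-1` this product is
`(1 - X²)^(-ℓ) (1 - X)^(-M)`, and since the first factor only has even powers, the coefficient of
`X^(2p)` is the convolution `∑ C(j + ℓ - 1, j) C(2m + M - 1, 2m)` over `j + m = p`.
-/

open PowerSeries Finset

section SignVector

variable {ι : Type*} [Fintype ι] {ε : ι → ℤ}

theorem filter_not_eq_one_eq_filter_eq_neg_one (hε : ∀ i, ε i = 1 ∨ ε i = -1) :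
    univ.filter (fun i => ¬ ε i = 1) = univ.filter (fun i => ε i = -1) :=
  filter_congr fun i _ => ⟨(hε i).resolve_left, fun h => by simp [h]⟩

theorem card_filter_eq_one_add_card_filter_eq_neg_one (hε : ∀ i, ε i = 1 ∨ ε i = -1) :
    #{i | ε i = 1} + #{i | ε i = -1} = Fintype.card ι := by
  rw [← filter_not_eq_one_eq_filter_eq_neg_one hε, card_filter_add_card_filter_not, card_univ]

theorem sum_eq_card_filter_eq_one_sub_card_filter_eq_neg_one
    (hε : ∀ i, ε i = 1 ∨ ε i = -1) :
    ∑ i, ε i = #{i | ε i = 1} - #{i | ε i = -1} := by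
  rw [← sum_filter_add_sum_filter_not univ (ε · = 1), filter_not_eq_one_eq_filter_eq_neg_one hε,
    sum_congr rfl fun i hi => (mem_filter.mp hi).2, sum_congr rfl fun i hi => (mem_filter.mp hi).2]
  simp [sub_eq_add_neg]

end SignVector

namespace PowerSeries

variable {R : Type*}

theorem sum_antidiagonalTuple_prod_eq_coeff_prod [CommSemiring R] (N n : ℕ)
    (f : Fin N → ℕ → R) :
    ∑ q ∈ Nat.antidiagonalTuple N n, ∏ i, f i (q i) = coeff n (∏ i, mk (f i)) := by
  classical
  rw [coeff_prod]
  refine sum_nbij' Finsupp.equivFunOnFinite.symm (⇑) (fun q hq => ?_) (fun l hl => ?_)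
    (fun _ _ => rfl) (fun l _ => Finsupp.equivFunOnFinite_symm_coe l) (fun _ _ => by simp)
  · rw [Nat.mem_antidiagonalTuple] at hq
    simpa [Finsupp.sum] using hq
  · rw [mem_finsuppAntidiag] at hl
    exact Nat.mem_antidiagonalTuple.mpr hl.1

theorem coeff_mk_one_pow [CommRing R] (d n : ℕ) :
    coeff n ((mk 1 : R⟦X⟧) ^ d) = (n + d - 1).choose n := by
  rcases d with _ | d
  · rcases n with _ | n
    · simp
    · simp [coeff_one]
  · rw [mk_one_pow_eq_mk_choose_add, coeff_mk, ← add_assoc, Nat.add_sub_cancel, add_comm n,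
      Nat.choose_symm_add]

theorem mk_neg_one_pow_mul_mk_one [CommRing R] :
    mk (fun k => (-1 : R) ^ k) * mk 1 = expand 2 two_ne_zero (mk 1) := by
  ext n
  rw [coeff_mul, Nat.sum_antidiagonal_eq_sum_range_succ_mk]
  simp only [coeff_mk, Pi.one_apply, mul_one, neg_one_geom_sum, coeff_expand,
    Nat.even_add_one, ← even_iff_two_dvd]
  split_ifs <;> rfl

theorem coeff_expand_mul_mul [CommRing R] (d : ℕ) (hd : d ≠ 0) (φ ψ : R⟦X⟧) (n : ℕ) :
    coeff (d * n) (expand d hd φ * ψ)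
      = ∑ jk ∈ antidiagonal n, coeff jk.1 φ * coeff (d * jk.2) ψ := by
  rw [coeff_mul]
  refine (sum_of_injOn (fun jk => (d * jk.1, d * jk.2)) ?_ ?_ ?_ ?_).symm
  · rintro ⟨j, k⟩ - ⟨j', k'⟩ - h
    simp only [Prod.mk.injEq, mul_right_inj' hd] at h
    rw [h.1, h.2]
  · rintro ⟨j, k⟩ h
    simp only [mem_coe, HasAntidiagonal.mem_antidiagonal] at h ⊢
    rw [← h, mul_add]
  · rintro ⟨a, b⟩ hab hnot
    rw [HasAntidiagonal.mem_antidiagonal] at hab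
    rw [coeff_expand_of_not_dvd _ _ _ ?_, zero_mul]
    rintro ⟨j, rfl⟩
    have hb : d ∣ b := (Nat.dvd_add_right ⟨j, rfl⟩).mp (hab ▸ dvd_mul_right d n)
    obtain ⟨k, rfl⟩ := hb
    refine hnot ⟨(j, k), ?_, rfl⟩
    simpa [← mul_add, mul_right_inj' hd] using hab
  · rintro ⟨j, k⟩ -
    rw [coeff_expand_mul]

theorem prod_mk_pow_of_sign {ι : Type*} [Fintype ι] {ε : ι → ℤ}
    (hε : ∀ i, ε i = 1 ∨ ε i = -1) :
    ∏ i, mk (fun k => ε i ^ k)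
      = mk 1 ^ #{i | ε i = 1} * mk (fun k => (-1 : ℤ) ^ k) ^ #{i | ε i = -1} := by
  rw [← filter_not_eq_one_eq_filter_eq_neg_one hε, ← prod_const, ← prod_const, ← prod_ite]
  refine prod_congr rfl fun i _ => ?_
  rcases hε i with h | h <;> simp [h, Pi.one_def]

end PowerSeries

theorem signed_sum_of_monomials_eq_general
    (N M p : ℕ)
    (ℓ : ℕ) (hℓ : ℓ = (N - M) / 2)
    (ε : Fin N → ℤ) (hε : ∀ i, ε i = 1 ∨ ε i = -1)
    (hsum : ∑ i, ε i = (M : ℤ)) :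
    ∑ q ∈ Finset.Nat.antidiagonalTuple N (2 * p), ∏ i, ε i ^ q i
      = ∑ m ∈ Finset.range (p + 1),
          ((p - m + ℓ - 1).choose (p - m) * (2 * m + M - 1).choose (2 * m) : ℤ) := by
  have hcard := card_filter_eq_one_add_card_filter_eq_neg_one hε
  have hdiff := sum_eq_card_filter_eq_one_sub_card_filter_eq_neg_one hε
  rw [Fintype.card_fin] at hcard
  have hneg : #{i | ε i = -1} = ℓ := by omega
  have hpos : #{i | ε i = 1} = ℓ + M := by omega
  have hgen : ∏ i, PowerSeries.mk (fun k => ε i ^ k)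
      = expand 2 two_ne_zero (PowerSeries.mk 1 ^ ℓ) * PowerSeries.mk 1 ^ M := by
    rw [prod_mk_pow_of_sign hε, hpos, hneg, map_pow, ← mk_neg_one_pow_mul_mk_one]
    ring
  rw [sum_antidiagonalTuple_prod_eq_coeff_prod, hgen, coeff_expand_mul_mul,
    ← Nat.sum_antidiagonal_swap]
  simp only [Prod.fst_swap, Prod.snd_swap, coeff_mk_one_pow]
  rw [Nat.sum_antidiagonal_eq_sum_range_succ
    (fun m j => ((j + ℓ - 1).choose j * (2 * m + M - 1).choose (2 * m) : ℤ))]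

/-- **Lemma 2.1 (combinatorial core).**
For a sign vector `ε : Fin N → ℤ` with `∑ i, ε i = M` (where `0 ≤ M ≤ N`,
`N ≡ M (mod 2)`, `ℓ = (N - M)/2`), the signed sum of the monomials
`∏ i, (ε i)^(q i)` over all weak compositions `q` of `2p` into `N` parts equals
`∑_{m=0}^{p} C(p - m + ℓ - 1, p - m) * C(2m + M - 1, 2m)`. -/
theorem signed_sum_of_monomials_eq
    (N M p : ℕ) (hp : 1 ≤ p) (hMN : M ≤ N) (hmod : N % 2 = M % 2)
    (ℓ : ℕ) (hℓ : ℓ = (N - M) / 2)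
    (ε : Fin N → ℤ) (hε : ∀ i, ε i = 1 ∨ ε i = -1)
    (hsum : ∑ i, ε i = (M : ℤ)) :
    ∑ q ∈ Finset.Nat.antidiagonalTuple N (2 * p), ∏ i, ε i ^ q i
      = ∑ m ∈ Finset.range (p + 1),
          ((p - m + ℓ - 1).choose (p - m) * (2 * m + M - 1).choose (2 * m) : ℤ) :=
  signed_sum_of_monomials_eq_general N M p ℓ hℓ ε hε hsum
end

section
/- (Balanced case, Corollary 3.2.) Let N be a positive even natural number and p ≥ 1 a natural number. Then K(N, 0, p) = (N/2)^{p+1} · √π · Γ(N/2) / Γ(p + N/2 + 1/2) · (2p)! / (2^p · p!), where Γ is the real Gamma function. Equivalently, 2^N · N^p · C(p + N/2 − 1, p) / (C(N, N/2) · C(2p + N − 1, 2p)) = (N/2)^{p+1} · √π · Γ(N/2) / Γ(p + N/2 + 1/2) · (2p)! / (2^p · p!). -/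
/-!
Write `N = 2(n + 1)`. Everything reduces to factorials and odd double factorials through
`Γ(k + 1/2) = (2k - 1)‼ √π / 2^k` and `(2k)! = 2^k k! (2k - 1)‼`, which turn the two binomial
coefficients into `C(p + n, p) (2(p + n) + 1)‼ = C(2(p + n) + 1, 2p) (2p - 1)‼ (2n + 1)‼` and
`C(2n + 2, n + 1) (n + 1)! = 2^(n + 1) (2n + 1)‼`. Both sides then equal
`2^(p + n + 1) (n + 1)^p (n + 1)! (2p - 1)‼ / (2(p + n) + 1)‼`.
-/

open Real Nat

namespace Nat

theorem factorial_two_mul_add_one (k : ℕ) : (2 * k + 1)! = 2 ^ k * k ! * (2 * k + 1)‼ := by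
  rw [factorial_eq_mul_doubleFactorial, doubleFactorial_two_mul]
  ring

theorem factorial_two_mul (k : ℕ) : (2 * k)! = 2 ^ k * k ! * (2 * k - 1)‼ := by
  cases k with
  | zero => rfl
  | succ k =>
    rw [show 2 * (k + 1) = 2 * k + 1 + 1 by ring, factorial_eq_mul_doubleFactorial,
      show 2 * k + 1 + 1 = 2 * (k + 1) by ring, doubleFactorial_two_mul,
      show 2 * (k + 1) - 1 = 2 * k + 1 by omega]

theorem centralBinom_mul_factorial (n : ℕ) : centralBinom n * n ! = 2 ^ n * (2 * n - 1)‼ := by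
  refine Nat.eq_of_mul_eq_mul_right n.factorial_pos ?_
  calc centralBinom n * n ! * n ! = (2 * n)! := by
        rw [centralBinom_eq_two_mul_choose,
          ← choose_mul_factorial_mul_factorial (by omega : n ≤ 2 * n), show 2 * n - n = n by omega]
    _ = 2 ^ n * (2 * n - 1)‼ * n ! := by
        rw [factorial_two_mul]
        ring

theorem add_choose_mul_doubleFactorial (a b : ℕ) :
    (a + b).choose a * (2 * (a + b) + 1)‼
      = (2 * (a + b) + 1).choose (2 * a) * ((2 * a - 1)‼ * (2 * b + 1)‼) := by
  refine Nat.eq_of_mul_eq_mul_left (by positivity : 0 < 2 ^ (a + b) * a ! * b !) ?_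
  calc 2 ^ (a + b) * a ! * b ! * ((a + b).choose a * (2 * (a + b) + 1)‼)
      = (2 * (a + b) + 1)! := by
        rw [factorial_two_mul_add_one, ← choose_mul_factorial_mul_factorial (le_add_right a b),
          Nat.add_sub_cancel_left]
        ring
    _ = 2 ^ (a + b) * a ! * b ! *
          ((2 * (a + b) + 1).choose (2 * a) * ((2 * a - 1)‼ * (2 * b + 1)‼)) := by
        rw [← choose_mul_factorial_mul_factorial (by omega : 2 * a ≤ 2 * (a + b) + 1),
          show 2 * (a + b) + 1 - 2 * a = 2 * b + 1 by omega, factorial_two_mul,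
          factorial_two_mul_add_one]
        ring

end Nat

theorem balanced_constant_eq_gamma_general
    (N p : ℕ) (hN : 0 < N) (hNeven : N % 2 = 0) :
    (2 : ℝ) ^ N * (N : ℝ) ^ p * ((p + N / 2 - 1).choose p : ℝ) /
        ((N.choose (N / 2) : ℝ) * ((2 * p + N - 1).choose (2 * p) : ℝ))
      = ((N : ℝ) / 2) ^ (p + 1) * Real.sqrt π * Real.Gamma ((N : ℝ) / 2) /
          Real.Gamma ((p : ℝ) + (N : ℝ) / 2 + 1 / 2) *
          ((2 * p).factorial : ℝ) / (2 ^ p * (p.factorial : ℝ)) := by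
  obtain ⟨n, rfl⟩ : ∃ n, N = 2 * (n + 1) := ⟨N / 2 - 1, by omega⟩
  rw [show 2 * (n + 1) / 2 = n + 1 by omega, show p + (n + 1) - 1 = p + n by omega,
    show 2 * p + 2 * (n + 1) - 1 = 2 * (p + n) + 1 by omega,
    show ((2 * (n + 1) : ℕ) : ℝ) / 2 = n + 1 by push_cast; ring,
    show (p : ℝ) + (n + 1) + 1 / 2 = ((p + n + 1 : ℕ) : ℝ) + 1 / 2 by push_cast; ring,
    Gamma_nat_add_half, show 2 * (p + n + 1) - 1 = 2 * (p + n) + 1 by omega,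
    Gamma_nat_eq_factorial, factorial_two_mul]
  have hcentral :
      ((2 * (n + 1)).choose (n + 1) : ℝ) = 2 ^ (n + 1) * (2 * n + 1)‼ / (n + 1)! := by
    rw [eq_div_iff (by positivity), ← centralBinom_eq_two_mul_choose]
    exact_mod_cast centralBinom_mul_factorial (n + 1)
  have hchoose : ((p + n).choose p : ℝ) = (2 * (p + n) + 1).choose (2 * p) *
      ((2 * p - 1)‼ * (2 * n + 1)‼) / (2 * (p + n) + 1)‼ := by
    rw [eq_div_iff (by positivity)]
    exact_mod_cast add_choose_mul_doubleFactorial p n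
  have hpos : 0 < ((2 * (p + n) + 1).choose (2 * p) : ℝ) := by
    exact_mod_cast choose_pos (by omega)
  rw [hcentral, hchoose, factorial_succ]
  push_cast [mul_pow]
  field_simp
  ring

/-- **Corollary 3.2 (balanced case).**
For even `N > 0` and `p ≥ 1`,
`K(N, 0, p) = 2^N N^p C(p + N/2 - 1, p) / (C(N, N/2) C(2p + N - 1, 2p))`
equals `(N/2)^{p+1} √π Γ(N/2) / Γ(p + N/2 + 1/2) · (2p)! / (2^p p!)`. -/
theorem balanced_constant_eq_gamma
    (N p : ℕ) (hN : 0 < N) (hNeven : N % 2 = 0) (hp : 1 ≤ p) :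
    (2 : ℝ) ^ N * (N : ℝ) ^ p * ((p + N / 2 - 1).choose p : ℝ) /
        ((N.choose (N / 2) : ℝ) * ((2 * p + N - 1).choose (2 * p) : ℝ))
      = ((N : ℝ) / 2) ^ (p + 1) * Real.sqrt π * Real.Gamma ((N : ℝ) / 2) /
          Real.Gamma ((p : ℝ) + (N : ℝ) / 2 + 1 / 2) *
          ((2 * p).factorial : ℝ) / (2 ^ p * (p.factorial : ℝ)) :=
  balanced_constant_eq_gamma_general N p hN hNeven
end

section
/- (Proposition 4.1, inequality part.) Let N be a positive even natural number and p ≥ 1 a natural number. Then (N/2)^{p+1} · √π · Γ(N/2) / Γ(p + N/2 + 1/2) · (2p)! / (2^p · p!) ≤ (2^N · N^p / (N+1)^p) · ((N/2)!)^2 / N! · (2p)! / (2^p · p!). -/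
/-! Write `N = 2m`. The functional equation gives `Γ(p + m + 1/2) ≥ (m + 1/2)^p Γ(m + 1/2)`, and
after this single estimate the inequality is an identity: `m Γ(m) = m!` and
`Γ(m + 1/2) = (2m-1)‼ √π / 2^m` with `(2m)! = 2^m m! (2m-1)‼`. -/

open Real
open scoped Nat

theorem Nat.factorial_two_mul_eq_two_pow_mul (m : ℕ) : (2 * m)! = 2 ^ m * m ! * (2 * m - 1)‼ := by
  cases m with
  | zero => rfl
  | succ k =>
    rw [show 2 * (k + 1) = 2 * k + 1 + 1 by ring, Nat.factorial_eq_mul_doubleFactorial,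
      show 2 * k + 1 + 1 = 2 * (k + 1) by ring, Nat.doubleFactorial_two_mul]
    rfl

namespace Real

theorem Gamma_mul_pow_le_Gamma_nat_add {x : ℝ} (hx : 0 < x) (p : ℕ) :
    Gamma x * x ^ p ≤ Gamma (p + x) := by
  induction p with
  | zero => simp
  | succ q ih =>
    have hqx : 0 < (q : ℝ) + x := by positivity
    calc Gamma x * x ^ (q + 1) = Gamma x * x ^ q * x := by ring
      _ ≤ Gamma (q + x) * (q + x) := by
        gcongr
        linarith [(q.cast_nonneg : (0 : ℝ) ≤ q)]
      _ = Gamma ((q + 1 : ℕ) + x) := by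
        rw [Nat.cast_succ, add_right_comm, Gamma_add_one hqx.ne', mul_comm]

end Real

theorem pow_mul_Gamma_div_Gamma_add_half_le {m : ℕ} (hm : m ≠ 0) (p : ℕ) :
    (m : ℝ) ^ (p + 1) * √π * Gamma m / Gamma (p + m + 1 / 2)
      ≤ 2 ^ (2 * m) * (2 * m : ℝ) ^ p / (2 * m + 1) ^ p * (m ! ^ 2 / (2 * m)!) := by
  have hΓm : m * Gamma m = m ! := by
    rw [← Gamma_add_one (by positivity), Gamma_nat_eq_factorial]
  have hΓm_pos : 0 < Gamma m := Gamma_pos_of_pos (by positivity)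
  have hΓ : Gamma (m + 1 / 2) * (m + 1 / 2) ^ p ≤ Gamma (p + m + 1 / 2) := by
    simpa only [add_assoc] using Gamma_mul_pow_le_Gamma_nat_add (x := m + 1 / 2) (by positivity) p
  calc (m : ℝ) ^ (p + 1) * √π * Gamma m / Gamma (p + m + 1 / 2)
      ≤ (m : ℝ) ^ (p + 1) * √π * Gamma m / (Gamma (m + 1 / 2) * (m + 1 / 2) ^ p) := by
        gcongr
    _ = 2 ^ (2 * m) * (2 * m : ℝ) ^ p / (2 * m + 1) ^ p * (m ! ^ 2 / (2 * m)!) := by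
        have : (0 : ℝ) < (2 * m - 1)‼ := by exact_mod_cast Nat.doubleFactorial_pos _
        rw [Gamma_nat_add_half, Nat.factorial_two_mul_eq_two_pow_mul]
        push_cast
        rw [← hΓm, show (m : ℝ) + 1 / 2 = (2 * m + 1) / 2 by ring, div_pow]
        field_simp
        ring

theorem balanced_constant_upper_bound_general
    (N p : ℕ) (hN : 0 < N) (hNeven : N % 2 = 0) :
    ((N : ℝ) / 2) ^ (p + 1) * Real.sqrt π * Real.Gamma ((N : ℝ) / 2) /
        Real.Gamma ((p : ℝ) + (N : ℝ) / 2 + 1 / 2) *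
        ((2 * p).factorial : ℝ) / (2 ^ p * (p.factorial : ℝ))
      ≤ (2 : ℝ) ^ N * (N : ℝ) ^ p / ((N : ℝ) + 1) ^ p *
          (((N / 2).factorial : ℝ) ^ 2 / (N.factorial : ℝ)) *
          ((2 * p).factorial : ℝ) / (2 ^ p * (p.factorial : ℝ)) := by
  obtain ⟨m, rfl⟩ : ∃ m, N = 2 * m := ⟨N / 2, by omega⟩
  have hm : m ≠ 0 := by omega
  have hcast : ((2 * m : ℕ) : ℝ) / 2 = m := by push_cast; ring
  rw [hcast, Nat.mul_div_cancel_left m two_pos]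
  push_cast
  gcongr
  exact pow_mul_Gamma_div_Gamma_add_half_le hm p

/-- **Proposition 4.1 (balanced case: upper bound, inequality part).**
For even `N > 0` and `p ≥ 1`,
`(N/2)^{p+1} √π Γ(N/2) / Γ(p + N/2 + 1/2) · (2p)!/(2^p p!)
  ≤ (2^N N^p / (N+1)^p) · ((N/2)!)^2 / N! · (2p)!/(2^p p!)`. -/
theorem balanced_constant_upper_bound
    (N p : ℕ) (hN : 0 < N) (hNeven : N % 2 = 0) (hp : 1 ≤ p) :
    ((N : ℝ) / 2) ^ (p + 1) * Real.sqrt π * Real.Gamma ((N : ℝ) / 2) /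
        Real.Gamma ((p : ℝ) + (N : ℝ) / 2 + 1 / 2) *
        ((2 * p).factorial : ℝ) / (2 ^ p * (p.factorial : ℝ))
      ≤ (2 : ℝ) ^ N * (N : ℝ) ^ p / ((N : ℝ) + 1) ^ p *
          (((N / 2).factorial : ℝ) ^ 2 / (N.factorial : ℝ)) *
          ((2 * p).factorial : ℝ) / (2 ^ p * (p.factorial : ℝ)) :=
  balanced_constant_upper_bound_general N p hN hNeven
end

section
/- (Theorem 4.2: asymptotics of a growing sample with fixed sum M.) Fix natural numbers p ≥ 2 and M ≥ 1. For natural numbers N > M with N ≡ M (mod 2), define K(N, M, p) = (2^N · N^p / (C(N, (N+M)/2) · C(2p + N − 1, 2p))) · ∑_{m=0}^{p} C(p − m + (N−M)/2 − 1, p − m) · C(2m + M − 1, 2m), and define G(N) = √(π (N² − M²) / (2N)) · e^{−Mp/N} / (M−1)! · (2p)! / 2^p · ∑_{m=0}^{p} ((2m + M − 1)! / ((p−m)! · (2m)!)) · (2/(N−M))^m. Then K(N, M, p)/G(N) → 1 as N → ∞ along the natural numbers N with N ≡ M (mod 2). -/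
/-!
Write `N = 2n + M` and let `n → ∞`. Every factor of `K` and of `G` has an elementary asymptotic
equivalent: by Stirling, `C(2n+M, n+M) ~ 2^N / √(πn)`; `C(2p+N-1, 2p) ~ N^{2p} / (2p)!`; in both
sums over `m` only the term `m = 0` survives, giving `n^p / p!` and `(M-1)! / p!`; the square root
is `~ √(πn)` and the exponential tends to `1`. Multiplying out, both `K` and `G` are
`~ (2p)! / (p! 2^p) · √(πn)`.
-/

open Real Filter Finset Asymptotics Topology Nat

lemma tendsto_mul_add_div_mul_add (a b c d : ℝ) (hc : c ≠ 0) :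
    Tendsto (fun n : ℕ => (a * n + b) / (c * n + d)) atTop (𝓝 (a / c)) := by
  have h : Tendsto (fun n : ℕ => (a + b / n) / (c + d / n)) atTop (𝓝 ((a + 0) / (c + 0))) :=
    (tendsto_const_nhds.add (tendsto_const_div_atTop_nhds_zero_nat b)).div
      (tendsto_const_nhds.add (tendsto_const_div_atTop_nhds_zero_nat d)) (by simpa using hc)
  rw [add_zero, add_zero] at h
  refine h.congr' ?_
  filter_upwards [eventually_ne_atTop 0] with n hn
  field_simp

lemma isEquivalent_mul_add (a b : ℝ) (ha : a ≠ 0) :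
    (fun n : ℕ => a * n + b) ~[atTop] fun n => a * n := by
  have h := tendsto_mul_add_div_mul_add a b a 0 ha
  rw [div_self ha] at h
  simp only [add_zero] at h
  exact isEquivalent_of_tendsto_one h

lemma Asymptotics.IsEquivalent.sqrt {α : Type*} {l : Filter α} {u v : α → ℝ} (hv : 0 ≤ v)
    (h : u ~[l] v) : (fun x => √(u x)) ~[l] fun x => √(v x) := by
  simp only [Real.sqrt_eq_rpow]
  exact h.rpow hv

lemma tendsto_sum_mul_pow_of_tendsto_zero {α : Type*} {l : Filter α} {a : ℕ → α → ℝ}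
    {c : ℕ → ℝ} {x : α → ℝ} (p : ℕ) (ha : ∀ m, Tendsto (a m) l (𝓝 (c m)))
    (hx : Tendsto x l (𝓝 0)) :
    Tendsto (fun t => ∑ m ∈ range (p + 1), a m t * x t ^ m) l (𝓝 (c 0)) := by
  simpa [zero_pow_eq] using tendsto_finsetSum (range (p + 1)) fun m _ => (ha m).mul (hx.pow m)

lemma isEquivalent_centralBinom :
    (fun n : ℕ => (n.centralBinom : ℝ)) ~[atTop] fun n => 4 ^ n / √(π * n) := by
  have hs := Stirling.factorial_isEquivalent_stirling
  refine (((hs.comp_tendsto (tendsto_id.const_mul_atTop' two_pos)).div (hs.mul hs)).congr_left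
    (Eventually.of_forall fun n => ?_)).congr_right ?_
  · simp [Nat.centralBinom_eq_two_mul_choose, Nat.cast_choose ℝ (by omega : n ≤ 2 * n),
      show 2 * n - n = n by omega]
  · filter_upwards [eventually_ne_atTop 0] with n hn
    simp only [Function.comp_apply, id_eq, Pi.div_apply, Pi.mul_apply, Nat.cast_mul,
      Nat.cast_ofNat]
    rw [show (2 * n / rexp 1) ^ (2 * n) = (4 : ℝ) ^ n * ((n / rexp 1) ^ n) ^ 2 by
        rw [mul_div_assoc, mul_pow, pow_mul, pow_mul']; norm_num,
      show 2 * (2 * (n : ℝ)) * π = 2 ^ 2 * (π * n) by ring,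
      show 2 * (n : ℝ) * π = 2 * (π * n) by ring,
      Real.sqrt_mul (by norm_num) (π * n), Real.sqrt_sq zero_le_two,
      div_eq_div_iff (by positivity) (by positivity)]
    have hr : √(π * n) ^ 2 = π * n := Real.sq_sqrt (by positivity)
    have hsq : √(2 * (π * n)) * √(2 * (π * n)) = 2 * (π * n) :=
      Real.mul_self_sqrt (by positivity)
    linear_combination (4 : ℝ) ^ n * ((n / rexp 1) ^ n) ^ 2 * (2 * hr - hsq)

lemma isEquivalent_choose_two_mul_add (M : ℕ) :
    (fun n : ℕ => ((2 * n + M).choose (n + M) : ℝ)) ~[atTop]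
      fun n => 2 ^ (2 * n + M) / √(π * n) := by
  induction M with
  | zero =>
    simpa [← Nat.centralBinom_eq_two_mul_choose, pow_mul, show (2 : ℝ) ^ 2 = 4 by norm_num]
      using isEquivalent_centralBinom
  | succ M ih =>
    have hratio :
        (fun n : ℕ => (2 * n + (M + 1) : ℝ) / (1 * n + (M + 1))) ~[atTop] fun _ => 2 :=
      (isEquivalent_const_iff_tendsto two_ne_zero).2 (by
        simpa using tendsto_mul_add_div_mul_add 2 (M + 1) 1 (M + 1) one_ne_zero)
    refine ((ih.mul hratio).congr_left (Eventually.of_forall fun n => ?_)).congr_right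
      (Eventually.of_forall fun n => ?_)
    · have h : ((2 * n + M + 1 : ℕ) : ℝ) * (2 * n + M).choose (n + M)
          = (2 * n + M + 1).choose (n + M + 1) * ((n + M + 1 : ℕ) : ℝ) := by
        exact_mod_cast Nat.add_one_mul_choose_eq (2 * n + M) (n + M)
      simp only [Pi.mul_apply, ← add_assoc]
      push_cast at h ⊢
      field_simp
      linear_combination h
    · simp only [Pi.mul_apply]
      ring

lemma isEquivalent_ascFactorial (k : ℕ) :
    (fun n : ℕ => (n.ascFactorial k : ℝ)) ~[atTop] fun n => (n : ℝ) ^ k := by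
  have h := (ascPochhammer ℝ k).isEquivalent_atTop_lead.comp_tendsto tendsto_natCast_atTop_atTop
  simp only [(monic_ascPochhammer ℝ k).leadingCoeff, ascPochhammer_natDegree, one_mul] at h
  simpa [Function.comp_def, ascPochhammer_nat_eq_natCast_ascFactorial] using h

lemma isEquivalent_choose_add_sub_one (k : ℕ) :
    (fun n : ℕ => ((k + n - 1).choose k : ℝ)) ~[atTop] fun n => (n : ℝ) ^ k / k ! := by
  refine ((isEquivalent_ascFactorial k).div (IsEquivalent.refl (u := fun _ => (k ! : ℝ))))
    |>.congr_left (Eventually.of_forall fun n => ?_)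
  simp only [Pi.div_apply, Nat.ascFactorial_eq_factorial_mul_choose', add_comm n k]
  push_cast
  field_simp

lemma isEquivalent_sum_choose_mul (p : ℕ) (b : ℕ → ℝ) (hb : b 0 ≠ 0) :
    (fun n : ℕ => ∑ m ∈ range (p + 1), ((p - m + n - 1).choose (p - m) : ℝ) * b m) ~[atTop]
      fun n => b 0 / p ! * (n : ℝ) ^ p := by
  have hterm (m : ℕ) : Tendsto (fun n : ℕ => ((p - m + n - 1).choose (p - m) : ℝ) /
      ((n : ℝ) ^ (p - m) / (p - m)!) * (b m * p ! / ((p - m)! * b 0))) atTop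
      (𝓝 (1 * (b m * p ! / ((p - m)! * b 0)))) := by
    refine Tendsto.mul_const _ ((isEquivalent_iff_tendsto_one ?_).1
      (isEquivalent_choose_add_sub_one (p - m)))
    filter_upwards [eventually_ne_atTop 0] with n hn
    positivity
  have h := tendsto_sum_mul_pow_of_tendsto_zero p hterm tendsto_inv_atTop_nhds_zero_nat
  rw [one_mul, Nat.sub_zero, show b 0 * p ! / (p ! * b 0) = 1 by field_simp] at h
  refine isEquivalent_of_tendsto_one (h.congr' ?_)
  filter_upwards [eventually_ne_atTop 0] with n hn
  simp only [Pi.div_apply, Finset.sum_div]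
  refine Finset.sum_congr rfl fun m hm => ?_
  rw [← pow_sub_mul_pow (n : ℝ) (Nat.lt_succ_iff.1 (Finset.mem_range.1 hm)), inv_pow]
  field_simp

lemma isEquivalent_sqrt_sq_sub_sq_div (M : ℝ) :
    (fun n : ℕ => √(π * ((2 * n + M) ^ 2 - M ^ 2) / (2 * (2 * n + M)))) ~[atTop]
      fun n => √(π * n) := by
  have hratio : (fun n : ℕ => (2 * n + 2 * M) / (2 * n + M)) ~[atTop] fun _ => (1 : ℝ) :=
    (isEquivalent_const_iff_tendsto one_ne_zero).2 (by
      simpa using tendsto_mul_add_div_mul_add 2 (2 * M) 2 M two_ne_zero)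
  refine IsEquivalent.sqrt (fun n => by positivity) ((IsEquivalent.refl.mul hratio).congr_left ?_
    |>.congr_right (Eventually.of_forall fun n => mul_one _))
  have h2n : Tendsto (fun n : ℕ => 2 * (n : ℝ)) atTop atTop :=
    tendsto_natCast_atTop_atTop.const_mul_atTop two_pos
  filter_upwards [(h2n.atTop_add (tendsto_const_nhds (x := M))).eventually_gt_atTop 0] with n hn
  simp only [Pi.mul_apply]
  field_simp
  ring

lemma isEquivalent_K_two_mul_add (p M : ℕ) :
    (fun n : ℕ => (2 : ℝ) ^ (2 * n + M) * (2 * n + M : ℝ) ^ p /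
        (((2 * n + M).choose (n + M) : ℝ) * ((2 * p + (2 * n + M) - 1).choose (2 * p) : ℝ)) *
        ∑ m ∈ range (p + 1), ((p - m + n - 1).choose (p - m) : ℝ) *
          ((2 * m + M - 1).choose (2 * m) : ℝ))
      ~[atTop] fun n => (2 * p)! / (p ! * 2 ^ p) * √(π * n) := by
  have hN : Tendsto (fun n : ℕ => 2 * n + M) atTop atTop :=
    tendsto_atTop_atTop.2 fun b => ⟨b, fun n hn => by omega⟩
  have hC2 : (fun n : ℕ => ((2 * p + (2 * n + M) - 1).choose (2 * p) : ℝ)) ~[atTop]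
      fun n => (2 * n : ℝ) ^ (2 * p) / (2 * p)! :=
    ((isEquivalent_choose_add_sub_one (2 * p)).comp_tendsto hN).trans <|
      (((isEquivalent_mul_add 2 M two_ne_zero).pow (2 * p)).div IsEquivalent.refl).congr_left
        (Eventually.of_forall fun n => by simp)
  have hS1 := isEquivalent_sum_choose_mul p (fun m => ((2 * m + M - 1).choose (2 * m) : ℝ))
    (by simp)
  refine (((IsEquivalent.refl (u := fun n : ℕ => (2 : ℝ) ^ (2 * n + M))).mul
    ((isEquivalent_mul_add 2 M two_ne_zero).pow p)).div
    ((isEquivalent_choose_two_mul_add M).mul hC2) |>.mul hS1).congr_right ?_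
  filter_upwards [eventually_ne_atTop 0] with n hn
  simp only [Pi.mul_apply, Pi.div_apply, Pi.pow_apply, mul_zero, zero_add, choose_zero_right,
    cast_one]
  field_simp
  ring

lemma isEquivalent_G_two_mul_add (p M : ℕ) :
    (fun n : ℕ => √(π * ((2 * n + M : ℝ) ^ 2 - M ^ 2) / (2 * (2 * n + M))) *
        rexp (-(M * p) / (2 * n + M)) / (M - 1)! * (2 * p)! / 2 ^ p *
        ∑ m ∈ range (p + 1), ((2 * m + M - 1)! / ((p - m)! * (2 * m)!) : ℝ) *
          (2 / (2 * n + M - M)) ^ m)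
      ~[atTop] fun n => (2 * p)! / (p ! * 2 ^ p) * √(π * n) := by
  have h2n : Tendsto (fun n : ℕ => 2 * (n : ℝ)) atTop atTop :=
    tendsto_natCast_atTop_atTop.const_mul_atTop two_pos
  have hexp : (fun n : ℕ => rexp (-(M * p) / (2 * n + M))) ~[atTop] fun _ => (1 : ℝ) := by
    refine (isEquivalent_const_iff_tendsto one_ne_zero).2 ?_
    simpa [Function.comp_def] using (continuous_exp.tendsto 0).comp
      (tendsto_const_nhds.div_atTop (h2n.atTop_add tendsto_const_nhds))
  have hS2 : (fun n : ℕ => ∑ m ∈ range (p + 1),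
      ((2 * m + M - 1)! / ((p - m)! * (2 * m)!) : ℝ) * (2 / (2 * n + M - M)) ^ m)
      ~[atTop] fun _ => ((M - 1)! / p ! : ℝ) := by
    refine (isEquivalent_const_iff_tendsto (by positivity)).2 ?_
    have h2nM : Tendsto (fun n : ℕ => 2 / (2 * (n : ℝ) + M - M)) atTop (𝓝 0) := by
      simpa only [add_sub_cancel_right] using tendsto_const_nhds.div_atTop h2n
    simpa using tendsto_sum_mul_pow_of_tendsto_zero p
      (c := fun m => ((2 * m + M - 1)! / ((p - m)! * (2 * m)!) : ℝ))
      (fun m => tendsto_const_nhds) h2nM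
  refine ((((isEquivalent_sqrt_sq_sub_sq_div M).mul hexp).div
    (IsEquivalent.refl (u := fun _ => ((M - 1)! : ℝ)))).mul
    (IsEquivalent.refl (u := fun _ => ((2 * p)! : ℝ))) |>.div
    (IsEquivalent.refl (u := fun _ => (2 ^ p : ℝ))) |>.mul hS2).congr_right
    (Eventually.of_forall fun n => ?_)
  simp only [Pi.mul_apply, Pi.div_apply, mul_one]
  field_simp

lemma tendsto_of_tendsto_comp_two_mul_add {β : Type*} {f : ℕ → β} {l : Filter β} (M : ℕ)
    (h : Tendsto (fun n => f (2 * n + M)) atTop l) :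
    Tendsto f (atTop ⊓ 𝓟 {N | N % 2 = M % 2}) l := by
  have hhalf : Tendsto (fun N : ℕ => (N - M) / 2) (atTop ⊓ 𝓟 {N | N % 2 = M % 2}) atTop :=
    (tendsto_atTop_atTop.2 fun b => ⟨2 * b + M, fun N hN => by omega⟩).mono_left inf_le_left
  refine (h.comp hhalf).congr' ?_
  filter_upwards [eventually_ge_atTop M |>.filter_mono inf_le_left,
    mem_inf_of_right (mem_principal_self _)] with N hMN hN
  simp only [Function.comp_apply] at hN ⊢
  congr 1
  omega

theorem asymptotics_fixed_M_general (p M : ℕ) :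
    Tendsto
      (fun N : ℕ =>
        (((2 : ℝ) ^ N * (N : ℝ) ^ p /
              ((N.choose ((N + M) / 2) : ℝ) * ((2 * p + N - 1).choose (2 * p) : ℝ))) *
            ∑ m ∈ Finset.range (p + 1),
              ((p - m + (N - M) / 2 - 1).choose (p - m) : ℝ) *
                ((2 * m + M - 1).choose (2 * m) : ℝ))
          /
        (Real.sqrt (π * ((N : ℝ) ^ 2 - (M : ℝ) ^ 2) / (2 * (N : ℝ))) *
            Real.exp (-((M : ℝ) * (p : ℝ)) / (N : ℝ)) / ((M - 1).factorial : ℝ) *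
            ((2 * p).factorial : ℝ) / 2 ^ p *
            ∑ m ∈ Finset.range (p + 1),
              (((2 * m + M - 1).factorial : ℝ) /
                  (((p - m).factorial : ℝ) * ((2 * m).factorial : ℝ))) *
                (2 / ((N : ℝ) - (M : ℝ))) ^ m))
      (atTop ⊓ Filter.principal {N : ℕ | M < N ∧ N % 2 = M % 2})
      (nhds 1) := by
  refine (tendsto_of_tendsto_comp_two_mul_add M ?_).mono_left
    (inf_le_inf_left _ (principal_mono.2 fun N hN => hN.2))
  simp only [show ∀ n, (2 * n + M + M) / 2 = n + M by omega,
    show ∀ n, (2 * n + M - M) / 2 = n by omega]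
  push_cast
  refine ((isEquivalent_K_two_mul_add p M).div (isEquivalent_G_two_mul_add p M)).symm.tendsto_nhds
    (tendsto_const_nhds.congr' ?_)
  filter_upwards [eventually_ne_atTop 0] with n hn
  exact (div_self (by positivity)).symm

/-- **Theorem 4.2 (asymptotics of a growing sample with fixed sum `M`).**
For fixed `p ≥ 2` and `M ≥ 1`, the best constant
`K(N, M, p) = (2^N N^p / (C(N,(N+M)/2) C(2p+N-1,2p))) *
  ∑_{m=0}^{p} C(p-m+(N-M)/2-1, p-m) C(2m+M-1, 2m)`
satisfies `K(N, M, p) / G(N) → 1` as `N → ∞` along naturals `N > M` with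
`N ≡ M (mod 2)`, where
`G(N) = √(π(N²-M²)/(2N)) · e^{-Mp/N}/(M-1)! · (2p)!/2^p ·
  ∑_{m=0}^{p} ((2m+M-1)!/((p-m)!(2m)!)) (2/(N-M))^m`. -/
theorem asymptotics_fixed_M (p M : ℕ) (hp : 2 ≤ p) (hM : 1 ≤ M) :
    Tendsto
      (fun N : ℕ =>
        (((2 : ℝ) ^ N * (N : ℝ) ^ p /
              ((N.choose ((N + M) / 2) : ℝ) * ((2 * p + N - 1).choose (2 * p) : ℝ))) *
            ∑ m ∈ Finset.range (p + 1),
              ((p - m + (N - M) / 2 - 1).choose (p - m) : ℝ) *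
                ((2 * m + M - 1).choose (2 * m) : ℝ))
          /
        (Real.sqrt (π * ((N : ℝ) ^ 2 - (M : ℝ) ^ 2) / (2 * (N : ℝ))) *
            Real.exp (-((M : ℝ) * (p : ℝ)) / (N : ℝ)) / ((M - 1).factorial : ℝ) *
            ((2 * p).factorial : ℝ) / 2 ^ p *
            ∑ m ∈ Finset.range (p + 1),
              (((2 * m + M - 1).factorial : ℝ) /
                  (((p - m).factorial : ℝ) * ((2 * m).factorial : ℝ))) *
                (2 / ((N : ℝ) - (M : ℝ))) ^ m))
      (atTop ⊓ Filter.principal {N : ℕ | M < N ∧ N % 2 = M % 2})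
      (nhds 1) :=
  asymptotics_fixed_M_general p M
end

section
/- (Proposition 5.2.) Fix a natural number p ≥ 2 and a real number α > 1. Define, for natural numbers n ≥ 1, G(n) = √(2π n α / (α+1)) · α^{α n} · 2^{(α+1) n} / (α+1)^{(α+1) n} · (2p)! / (α+1)^p · ∑_{m=0}^{p} (α−1)^{2m} · n^m / ((p−m)! · (2m)!), and B(n) = √(2π n α / (α+1)) · α^{α n} · 2^{(α+1) n} / (α+1)^{(α+1) n} · ((α−1)^{2p} · n^p / (p+1)^p) · (2p)! / ((α+1)^p · p!). Then for all sufficiently large n one has G(n) ≤ B(n). -/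
open Real Filter Finset Asymptotics

/-!
Both sides share the positive factor `√(2πnα/(α+1)) · α^{αn} 2^{(α+1)n} / (α+1)^{(α+1)n} ·
(2p)!/(α+1)^p`, so it suffices to compare `∑_{m ≤ p} (α-1)^{2m} n^m / ((p-m)!(2m)!)`, a polynomial
in `n` of degree `p` with leading coefficient `(α-1)^{2p}/(2p)!`, with `(α-1)^{2p} n^p / ((p+1)^p p!)`.
Since `(2p)! = p! · (p+1)(p+2)⋯(2p) > p! (p+1)^p` for `p ≥ 2`, the leading coefficient on the left
is strictly smaller, and the lower-order terms are `o(n^p)`.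
-/

theorem Nat.pow_mul_factorial_lt_factorial_two_mul {p : ℕ} (hp : 2 ≤ p) :
    (p + 1) ^ p * p.factorial < (2 * p).factorial :=
  calc (p + 1) ^ p * p.factorial < (p + 1).ascFactorial p * p.factorial :=
        Nat.mul_lt_mul_of_lt_of_le (Nat.pow_lt_ascFactorial p hp) le_rfl p.factorial_pos
    _ = (2 * p).factorial := by rw [mul_comm, two_mul, Nat.factorial_mul_ascFactorial]

theorem eventually_sum_mul_pow_le_mul_pow {c : ℕ → ℝ} {p : ℕ} {b : ℝ} (hb : c p < b) :
    ∀ᶠ x : ℝ in atTop, ∑ m ∈ range (p + 1), c m * x ^ m ≤ b * x ^ p := by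
  have hlower : (fun x : ℝ => ∑ m ∈ range p, c m * x ^ m) =o[atTop] fun x => x ^ p := by
    simpa only [Finset.sum_fn] using IsLittleO.sum fun m hm =>
      (isLittleO_pow_pow_atTop_of_lt (𝕜 := ℝ) (mem_range.mp hm)).const_mul_left (c m)
  filter_upwards [hlower.bound (sub_pos.mpr hb), eventually_ge_atTop 0] with x hx hx0
  rw [sum_range_succ]
  rw [Real.norm_eq_abs, Real.norm_eq_abs, abs_of_nonneg (pow_nonneg hx0 p)] at hx
  linarith [le_abs_self (∑ m ∈ range p, c m * x ^ m)]

/-- **Proposition 5.2 (upper bound for the proportional asymptotics).**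
For fixed `p ≥ 2` and `α > 1`, the asymptotic expression
`G(n) = √(2πnα/(α+1)) · α^{αn} 2^{(α+1)n} / (α+1)^{(α+1)n} · (2p)!/(α+1)^p ·
  ∑_{m=0}^{p} (α-1)^{2m} n^m / ((p-m)!(2m)!)`
is bounded above, for all sufficiently large `n`, by
`B(n) = √(2πnα/(α+1)) · α^{αn} 2^{(α+1)n} / (α+1)^{(α+1)n} ·
  ((α-1)^{2p} n^p / (p+1)^p) · (2p)!/((α+1)^p p!)`. -/
theorem proportional_upper_bound (p : ℕ) (hp : 2 ≤ p) (α : ℝ) (hα : 1 < α) :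
    ∃ n₀ : ℕ, ∀ n : ℕ, n₀ ≤ n →
      Real.sqrt (2 * π * (n : ℝ) * α / (α + 1)) *
          (α ^ (α * (n : ℝ)) * (2 : ℝ) ^ ((α + 1) * (n : ℝ)) /
            (α + 1) ^ ((α + 1) * (n : ℝ))) *
          ((2 * p).factorial : ℝ) / (α + 1) ^ p *
          ∑ m ∈ Finset.range (p + 1),
            (α - 1) ^ (2 * m) * (n : ℝ) ^ m /
              (((p - m).factorial : ℝ) * ((2 * m).factorial : ℝ))
        ≤ Real.sqrt (2 * π * (n : ℝ) * α / (α + 1)) *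
            (α ^ (α * (n : ℝ)) * (2 : ℝ) ^ ((α + 1) * (n : ℝ)) /
              (α + 1) ^ ((α + 1) * (n : ℝ))) *
            ((α - 1) ^ (2 * p) * (n : ℝ) ^ p / ((p : ℝ) + 1) ^ p) *
            ((2 * p).factorial : ℝ) / ((α + 1) ^ p * (p.factorial : ℝ)) := by
  set c : ℕ → ℝ := fun m => (α - 1) ^ (2 * m) / ((p - m).factorial * (2 * m).factorial)
  set b : ℝ := (α - 1) ^ (2 * p) / ((p + 1) ^ p * p.factorial)
  have hcb : c p < b := by
    have hfac : ((p : ℝ) + 1) ^ p * p.factorial < (2 * p).factorial := by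
      exact_mod_cast Nat.pow_mul_factorial_lt_factorial_two_mul hp
    simpa [c, b] using div_lt_div_of_pos_left (by positivity) (by positivity) hfac
  obtain ⟨n₀, hn₀⟩ := eventually_atTop.mp <|
    tendsto_natCast_atTop_atTop.eventually (eventually_sum_mul_pow_le_mul_pow hcb)
  refine ⟨n₀, fun n hn => ?_⟩
  have hpoly : ∑ m ∈ range (p + 1), (α - 1) ^ (2 * m) * (n : ℝ) ^ m /
      ((p - m).factorial * (2 * m).factorial) ≤ b * (n : ℝ) ^ p := by
    simpa only [c, div_mul_eq_mul_div] using hn₀ n hn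
  have hprefactor : 0 ≤ √(2 * π * n * α / (α + 1)) *
      (α ^ (α * (n : ℝ)) * (2 : ℝ) ^ ((α + 1) * (n : ℝ)) / (α + 1) ^ ((α + 1) * (n : ℝ))) *
      (2 * p).factorial / (α + 1) ^ p := by
    have : 0 < α := by linarith
    positivity
  calc _ ≤ _ := mul_le_mul_of_nonneg_left hpoly hprefactor
    _ = _ := by simp only [b]; field_simp
end
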